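/- Let F : L²(0,1) → L²(0,1) be defined by (Fu)(t) = -c₀ exp(-∫₀ᵗ u(s) ds) with c₀ > 0, and let κ > 0. Then F is cocoercive on M_κ = {u ∈ L²(0,1) : u ≥ κ a.e.} with constant τ = κ/(2c₀), i.e., ⟨Fu - Fv, u - v⟩ ≥ (κ/(2c₀))‖Fu - Fv‖² for all u, v ∈ M_κ. -/

import Mathlib

open RealInnerProductSpace MeasureTheory Set intervalIntegral Filter Real

/-!
Write `U, V` for the primitives of `u, v` on `[0, 1]` and `D` for the Bregman divergence of the
convex function `x ↦ exp (-x)`. As `U, V` are absolutely continuous with `U' = u`, `V' = v` a.e.,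
the fundamental theorem of calculus applied to `D (U t) (V t)` gives
`∫ (e^{-V} - e^{-U}) (u - v) = D (U 1) (V 1) + ∫ v D(U, V) ≥ κ ∫ D(U, V)`,
and symmetrically with `u` and `v` exchanged. Adding the two and using
`D x y + D y x = (x - y) (e^{-y} - e^{-x}) ≥ (e^{-y} - e^{-x})²` for `x, y ≥ 0`
bounds `∫ (e^{-V} - e^{-U}) (u - v)` below by `κ / 2 ∫ (e^{-V} - e^{-U})²`; this is the claim,
because `Fu - Fv = c₀ (e^{-V} - e^{-U})`.
-/

theorem LipschitzOnWith.comp_absolutelyContinuousOnInterval {X Y : Type*} [PseudoMetricSpace X]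
    [PseudoMetricSpace Y] {g : X → Y} {f : ℝ → X} {K : NNReal} {s : Set X} {a b : ℝ}
    (hg : LipschitzOnWith K g s) (hf : AbsolutelyContinuousOnInterval f a b)
    (hfs : MapsTo f (uIcc a b) s) : AbsolutelyContinuousOnInterval (g ∘ f) a b := by
  refine squeeze_zero' (Eventually.of_forall fun _ ↦ Finset.sum_nonneg fun _ _ ↦ dist_nonneg)
    ?_ (by simpa using Tendsto.const_mul (K : ℝ) hf)
  filter_upwards [mem_inf_of_right (mem_principal_self _)] with E hE
  rw [Finset.mul_sum]
  exact Finset.sum_le_sum fun i hi ↦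
    hg.dist_le_mul _ (hfs (hE.1 i hi).1) _ (hfs (hE.1 i hi).2)

theorem ContDiff.comp_absolutelyContinuousOnInterval {g f : ℝ → ℝ} {a b : ℝ}
    (hg : ContDiff ℝ 1 g) (hf : AbsolutelyContinuousOnInterval f a b) :
    AbsolutelyContinuousOnInterval (g ∘ f) a b := by
  obtain ⟨C, hC⟩ := hf.exists_bound
  obtain ⟨K, hK⟩ := hg.contDiffOn.exists_lipschitzOnWith (s := Icc (-C) C) one_ne_zero
    (convex_Icc _ _) isCompact_Icc
  exact hK.comp_absolutelyContinuousOnInterval hf fun x hx ↦ abs_le.1 (norm_eq_abs _ ▸ hC x hx)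

/-- The Bregman divergence of the convex function `x ↦ exp (-x)`. -/
noncomputable def expNegBregman (x y : ℝ) : ℝ := exp (-x) - exp (-y) + (x - y) * exp (-y)

lemma expNegBregman_nonneg (x y : ℝ) : 0 ≤ expNegBregman x y := by
  have key : exp (-x) = exp (-(x - y)) * exp (-y) := by rw [← exp_add]; ring_nf
  have := add_one_le_exp (-(x - y))
  rw [expNegBregman, key]
  nlinarith [exp_pos (-y)]

lemma expNegBregman_zero : expNegBregman 0 0 = 0 := by simp [expNegBregman]

lemma expNegBregman_add_swap (x y : ℝ) :
    expNegBregman x y + expNegBregman y x = (x - y) * (exp (-y) - exp (-x)) := by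
  unfold expNegBregman; ring

lemma HasDerivAt.expNegBregman {f g : ℝ → ℝ} {f' g' t : ℝ} (hf : HasDerivAt f f' t)
    (hg : HasDerivAt g g' t) :
    HasDerivAt (fun t ↦ expNegBregman (f t) (g t))
      (f' * (Real.exp (-g t) - Real.exp (-f t)) - g' * (f t - g t) * Real.exp (-g t)) t := by
  have h := (hf.neg.exp.sub hg.neg.exp).add ((hf.sub hg).mul hg.neg.exp)
  exact h.congr_deriv (by simp only [Pi.neg_apply, Pi.sub_apply]; ring)

lemma sq_exp_neg_sub_le_mul {x y : ℝ} (hx : 0 ≤ x) (hy : 0 ≤ y) :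
    (exp (-y) - exp (-x)) ^ 2 ≤ (x - y) * (exp (-y) - exp (-x)) := by
  wlog hyx : y ≤ x generalizing x y
  · nlinarith [this hy hx (le_of_not_ge hyx)]
  have hsign : 0 ≤ exp (-y) - exp (-x) := by
    linarith [exp_le_exp.2 (neg_le_neg hyx)]
  have hlip : exp (-y) - exp (-x) ≤ x - y := by
    have key : exp (-x) = exp (-(x - y)) * exp (-y) := by rw [← exp_add]; ring_nf
    have := add_one_le_exp (-(x - y))
    have : exp (-y) ≤ 1 := exp_le_one_iff.2 (by linarith)
    rw [key]
    nlinarith [exp_pos (-y), exp_pos (-(x - y))]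
  nlinarith

section Primitive

variable {u v : ℝ → ℝ} {a b : ℝ}

theorem absolutelyContinuousOnInterval_expNegBregman_primitive
    (hu : IntervalIntegrable u volume a b) (hv : IntervalIntegrable v volume a b) :
    AbsolutelyContinuousOnInterval
      (fun t ↦ expNegBregman (∫ s in a..t, u s) (∫ s in a..t, v s)) a b := by
  have hU := hu.absolutelyContinuousOnInterval_intervalIntegral left_mem_uIcc
  have hV := hv.absolutelyContinuousOnInterval_intervalIntegral left_mem_uIcc
  have hexpU := (contDiff_exp.comp contDiff_neg).comp_absolutelyContinuousOnInterval hU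
  have hexpV := (contDiff_exp.comp contDiff_neg).comp_absolutelyContinuousOnInterval hV
  exact (hexpU.fun_sub hexpV).fun_add ((hU.fun_sub hV).fun_mul hexpV)

theorem integral_exp_neg_primitive_sub_mul_sub (hu : IntervalIntegrable u volume a b)
    (hv : IntervalIntegrable v volume a b) :
    ∫ t in a..b, (exp (-∫ s in a..t, v s) - exp (-∫ s in a..t, u s)) * (u t - v t) =
      expNegBregman (∫ s in a..b, u s) (∫ s in a..b, v s) +
        ∫ t in a..b, v t * expNegBregman (∫ s in a..t, u s) (∫ s in a..t, v s) := by
  set D := fun t ↦ expNegBregman (∫ s in a..t, u s) (∫ s in a..t, v s)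
  have hD : AbsolutelyContinuousOnInterval D a b :=
    absolutelyContinuousOnInterval_expNegBregman_primitive hu hv
  have hderiv : ∀ᵐ t, t ∈ uIoc a b →
      (exp (-∫ s in a..t, v s) - exp (-∫ s in a..t, u s)) * (u t - v t) =
        deriv D t + v t * D t := by
    filter_upwards [hu.ae_hasDerivAt_integral, hv.ae_hasDerivAt_integral] with t hut hvt ht
    have ht' := uIoc_subset_uIcc ht
    rw [((hut ht' a left_mem_uIcc).expNegBregman (hvt ht' a left_mem_uIcc)).deriv]
    simp only [D, expNegBregman]
    ring
  rw [integral_congr_ae hderiv,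
    integral_add hD.intervalIntegrable_deriv (hv.mul_continuousOn hD.continuousOn),
    hD.integral_deriv_eq_sub]
  simp [D, expNegBregman_zero]

theorem mul_integral_expNegBregman_primitive_le {κ : ℝ} (hab : a ≤ b)
    (hu : IntervalIntegrable u volume a b) (hv : IntervalIntegrable v volume a b)
    (hκv : ∀ᵐ t ∂volume.restrict (Ioc a b), κ ≤ v t) :
    κ * ∫ t in a..b, expNegBregman (∫ s in a..t, u s) (∫ s in a..t, v s) ≤
      ∫ t in a..b, (exp (-∫ s in a..t, v s) - exp (-∫ s in a..t, u s)) * (u t - v t) := by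
  have hD := (absolutelyContinuousOnInterval_expNegBregman_primitive hu hv).continuousOn
  have hκD := ((continuousOn_const (c := κ)).mul hD).intervalIntegrable (μ := volume)
  have hvD := hv.mul_continuousOn hD
  rw [intervalIntegrable_iff_integrableOn_Ioc_of_le hab] at hκD hvD
  have hmono : ∫ t in a..b, κ * expNegBregman (∫ s in a..t, u s) (∫ s in a..t, v s) ≤
      ∫ t in a..b, v t * expNegBregman (∫ s in a..t, u s) (∫ s in a..t, v s) := by
    rw [integral_of_le hab, integral_of_le hab]
    refine setIntegral_mono_ae_restrict hκD hvD ?_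
    filter_upwards [hκv] with t ht
    exact mul_le_mul_of_nonneg_right ht (expNegBregman_nonneg _ _)
  rw [integral_exp_neg_primitive_sub_mul_sub hu hv, ← intervalIntegral.integral_const_mul]
  linarith [expNegBregman_nonneg (∫ s in a..b, u s) (∫ s in a..b, v s)]

theorem integral_nonneg_of_ae_restrict_Ioc {μ : Measure ℝ} {t : ℝ}
    (hu : 0 ≤ᵐ[μ.restrict (Ioc a b)] u) (ht : t ∈ Icc a b) : 0 ≤ ∫ s in a..t, u s ∂μ := by
  rw [integral_of_le ht.1]
  exact setIntegral_nonneg_of_ae_restrict (ae_restrict_of_ae_restrict_of_subset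
    (Ioc_subset_Ioc_right ht.2) hu)

theorem half_mul_integral_sq_exp_neg_primitive_sub_le {κ : ℝ} (hab : a ≤ b) (hκ : 0 ≤ κ)
    (hu : IntervalIntegrable u volume a b) (hv : IntervalIntegrable v volume a b)
    (hκu : ∀ᵐ t ∂volume.restrict (Ioc a b), κ ≤ u t)
    (hκv : ∀ᵐ t ∂volume.restrict (Ioc a b), κ ≤ v t) :
    κ / 2 * ∫ t in a..b, (exp (-∫ s in a..t, v s) - exp (-∫ s in a..t, u s)) ^ 2 ≤
      ∫ t in a..b, (exp (-∫ s in a..t, v s) - exp (-∫ s in a..t, u s)) * (u t - v t) := by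
  set U := fun t ↦ ∫ s in a..t, u s
  set V := fun t ↦ ∫ s in a..t, v s
  have hUV := mul_integral_expNegBregman_primitive_le hab hu hv hκv
  have hVU := mul_integral_expNegBregman_primitive_le hab hv hu hκu
  have hswap : ∫ t in a..b, (exp (-U t) - exp (-V t)) * (v t - u t) =
      ∫ t in a..b, (exp (-V t) - exp (-U t)) * (u t - v t) :=
    integral_congr fun t _ ↦ by ring
  have hU := hu.absolutelyContinuousOnInterval_intervalIntegral left_mem_uIcc
  have hV := hv.absolutelyContinuousOnInterval_intervalIntegral left_mem_uIcc
  have hDUV := (absolutelyContinuousOnInterval_expNegBregman_primitive hu hv).continuousOn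
  have hDVU := (absolutelyContinuousOnInterval_expNegBregman_primitive hv hu).continuousOn
  have hsum : (∫ t in a..b, expNegBregman (U t) (V t)) + ∫ t in a..b, expNegBregman (V t) (U t) =
      ∫ t in a..b, (U t - V t) * (exp (-V t) - exp (-U t)) :=
    (integral_add (hDUV.intervalIntegrable (μ := volume)) hDVU.intervalIntegrable).symm.trans
      (integral_congr fun t _ ↦ expNegBregman_add_swap _ _)
  have hexpU := hU.continuousOn.neg.rexp
  have hexpV := hV.continuousOn.neg.rexp
  have hsq : ∫ t in a..b, (exp (-V t) - exp (-U t)) ^ 2 ≤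
      ∫ t in a..b, (U t - V t) * (exp (-V t) - exp (-U t)) :=
    integral_mono_on hab ((hexpV.sub hexpU).pow 2).intervalIntegrable
      ((hU.continuousOn.sub hV.continuousOn).mul (hexpV.sub hexpU)).intervalIntegrable
      fun t ht ↦ sq_exp_neg_sub_le_mul
        (integral_nonneg_of_ae_restrict_Ioc (hκu.mono fun _ ↦ hκ.trans) ht)
        (integral_nonneg_of_ae_restrict_Ioc (hκv.mono fun _ ↦ hκ.trans) ht)
  have hκsq := mul_le_mul_of_nonneg_left hsq hκ
  rw [← hsum, mul_add] at hκsq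
  simp only [U, V] at hswap hκsq
  linarith

end Primitive

theorem MeasureTheory.L2.inner_eq_integral_of_ae_eq {α : Type*} [MeasurableSpace α]
    {μ : Measure α} {f g : Lp ℝ 2 μ} {φ ψ : α → ℝ} (hf : f =ᵐ[μ] φ) (hg : g =ᵐ[μ] ψ) :
    ⟪f, g⟫ = ∫ x, φ x * ψ x ∂μ := by
  rw [L2.inner_def]
  refine integral_congr_ae ?_
  filter_upwards [hf, hg] with x hfx hgx
  simp [hfx, hgx, mul_comm]

theorem stmt_14
    (μ : Measure ℝ) (hμ : μ = volume.restrict (Set.Ioc (0:ℝ) 1))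
    (c₀ κ : ℝ) (hc₀ : 0 < c₀) (hκ : 0 < κ)
    (F : Lp ℝ 2 μ → Lp ℝ 2 μ)
    (hF : ∀ u : Lp ℝ 2 μ,
      (F u : ℝ → ℝ) =ᵐ[μ]
        fun t => -c₀ * Real.exp (-(∫ s in Set.Ioc (0:ℝ) t, u s))) :
    ∀ u : Lp ℝ 2 μ, (∀ᵐ t ∂μ, κ ≤ u t) →
      ∀ v : Lp ℝ 2 μ, (∀ᵐ t ∂μ, κ ≤ v t) →
        ⟪F u - F v, u - v⟫ ≥ κ / (2 * c₀) * ‖F u - F v‖ ^ 2 := by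
  subst hμ
  intro u hu v hv
  have hintegrable (w : Lp ℝ 2 (volume.restrict (Ioc (0:ℝ) 1))) :
      IntervalIntegrable w volume 0 1 :=
    (intervalIntegrable_iff_integrableOn_Ioc_of_le zero_le_one).2
      ((Lp.memLp w).integrable one_le_two)
  have hFuv : ⇑(F u - F v) =ᵐ[volume.restrict (Ioc 0 1)] fun t ↦
      c₀ * (exp (-∫ s in (0:ℝ)..t, v s) - exp (-∫ s in (0:ℝ)..t, u s)) := by
    filter_upwards [Lp.coeFn_sub (F u) (F v), hF u, hF v, ae_restrict_mem measurableSet_Ioc]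
      with t hsub hFu hFv ht
    rw [hsub, Pi.sub_apply, hFu, hFv, integral_of_le ht.1.le, integral_of_le ht.1.le]
    ring
  rw [ge_iff_le, ← real_inner_self_eq_norm_sq, L2.inner_eq_integral_of_ae_eq hFuv hFuv,
    L2.inner_eq_integral_of_ae_eq hFuv (Lp.coeFn_sub u v)]
  have key := half_mul_integral_sq_exp_neg_primitive_sub_le zero_le_one hκ.le
    (hintegrable u) (hintegrable v) hu hv
  rw [integral_of_le zero_le_one, integral_of_le zero_le_one] at key
  simp only [Pi.sub_apply, mul_mul_mul_comm c₀, ← sq, mul_assoc c₀,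
    MeasureTheory.integral_const_mul]
  calc κ / (2 * c₀) * (c₀ ^ 2 * _) = c₀ * (κ / 2 * _) := by field_simp
    _ ≤ _ := mul_le_mul_of_nonneg_left key hc₀.le
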